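/- Let (V, 𝓗) be an arrangement, H₀ ∈ 𝓗, with deleted arrangement 𝓗' = 𝓗 ∖ {H₀} and induced arrangement 𝓗'' = {H ∩ H₀ : H ∈ 𝓗'}. Let L'' ∈ 𝓛_irr(𝓗'') with L'' ⊊ H₀, and let L ∈ 𝓛(𝓗') be the common intersection of all H ∈ 𝓗' with L'' ⊆ H. Then exactly one of the following holds: (i) L'' ⊊ L, and then 𝓗_{L''} = 𝓗_L ⊎ {H₀} is a u-plus decomposition with 𝓗_L irreducible (so the irreducible components of L'' as an element of 𝓛(𝓗) are L and H₀); or (ii) L = L'' and L ∈ 𝓛_irr(𝓗). In both cases L is an irreducible intersection of 𝓗. -/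

import Mathlib

open scoped Classical

noncomputable section

variable {V : Type*} [AddCommGroup V] [Module ℂ V]

/-- A linear hyperplane in `V`: the kernel of a non-zero linear functional. -/
def IsHyperplane (H : Submodule ℂ V) : Prop :=
  ∃ f : Module.Dual ℂ V, f ≠ 0 ∧ H = LinearMap.ker f

/-- An arrangement: every member of the finite set `𝓗` is a linear hyperplane. -/
def IsArrangement (𝓗 : Finset (Submodule ℂ V)) : Prop :=
  ∀ H ∈ 𝓗, IsHyperplane H

/-- The span `W(𝓗) ⊆ V⋆` of the defining functionals of the members of `𝓗`,
i.e. the supremum of the dual annihilators of the hyperplanes. -/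
def arrSpan (𝓗 : Finset (Submodule ℂ V)) : Submodule ℂ (Module.Dual ℂ V) :=
  ⨆ H ∈ 𝓗, Submodule.dualAnnihilator H

/-- The centre `T(𝓗)`: the common intersection of the members of `𝓗`. -/
def arrCentre (𝓗 : Finset (Submodule ℂ V)) : Submodule ℂ V :=
  ⨅ H ∈ 𝓗, H

/-- `𝓗` is essential if its centre is zero. -/
def ArrEssential (𝓗 : Finset (Submodule ℂ V)) : Prop :=
  arrCentre 𝓗 = ⊥

/-- `𝓗` is reducible if it admits a u-plus decomposition into two non-empty parts:
a partition `𝓗 = 𝓗₁ ⊎ 𝓗₂` with `W(𝓗) = W(𝓗₁) ⊕ W(𝓗₂)`. -/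
def ArrReducible (𝓗 : Finset (Submodule ℂ V)) : Prop :=
  ∃ 𝓗₁ 𝓗₂ : Finset (Submodule ℂ V), 𝓗₁.Nonempty ∧ 𝓗₂.Nonempty ∧
    Disjoint 𝓗₁ 𝓗₂ ∧ 𝓗₁ ∪ 𝓗₂ = 𝓗 ∧ Disjoint (arrSpan 𝓗₁) (arrSpan 𝓗₂)

/-- `𝓗` is irreducible if it is not reducible. -/
def ArrIrreducible (𝓗 : Finset (Submodule ℂ V)) : Prop :=
  ¬ ArrReducible 𝓗

/-- The intersection poset `𝓛(𝓗)`: all intersections of members of `𝓗`,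
with `V` itself as the empty intersection. -/
def arrInters (𝓗 : Finset (Submodule ℂ V)) : Set (Submodule ℂ V) :=
  {L | ∃ S : Finset (Submodule ℂ V), S ⊆ 𝓗 ∧ L = ⨅ H ∈ S, H}

/-- The localization `𝓗_L = {H ∈ 𝓗 : L ⊆ H}`. -/
def arrLoc (𝓗 : Finset (Submodule ℂ V)) (L : Submodule ℂ V) : Finset (Submodule ℂ V) :=
  𝓗.filter fun H => L ≤ H

/-- `L` is an irreducible intersection of `𝓗`: an intersection of (at least one of
the) members of `𝓗` whose localization `𝓗_L` is irreducible. -/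
def IsIrredInter (𝓗 : Finset (Submodule ℂ V)) (L : Submodule ℂ V) : Prop :=
  L ∈ arrInters 𝓗 ∧ (arrLoc 𝓗 L).Nonempty ∧ ArrIrreducible (arrLoc 𝓗 L)

/-- The induced (restricted) arrangement `𝓗'' = {H ∩ H₀ : H ∈ 𝓗 \ {H₀}}`, viewed as
an arrangement of hyperplanes in the vector space `H₀`. -/
def inducedArr (𝓗 : Finset (Submodule ℂ V)) (H₀ : Submodule ℂ V) :
    Finset (Submodule ℂ ↥H₀) :=
  (𝓗.erase H₀).image fun H => Submodule.comap H₀.subtype H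


/-!
Restricting hyperplanes to `H₀` is dual to the restriction map `r : V⋆ → H₀⋆`, whose kernel
is `ann H₀`, and `r` maps `W(𝓐)` onto `W(𝓐'')` for the restrictions `𝓐''` of the members of `𝓐`.
Hence a u-plus decomposition `𝓐 ⊎ 𝓑` of `𝓗'_{L''}` descends to one of `𝓗''_{L''}` as soon as
`W(𝓐) + ann H₀` still meets `W(𝓑)` trivially. If `L ⊄ H₀`, then `L + H₀ = V`, so `ann H₀` meets
`ann L ⊇ W(𝓗_L)` trivially and `𝓗_L = 𝓗'_{L''}` is irreducible. If `L ⊆ H₀`, then `L = L''`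
and `𝓗_L = 𝓗'_{L''} ⊎ {H₀}`; the part containing `H₀` already contains `ann H₀` in its span,
and it cannot be `{H₀}` alone, since the other part would then span `ann L ⊇ ann H₀`.
-/

theorem IsHyperplane.isCoatom {H : Submodule ℂ V} (h : IsHyperplane H) : IsCoatom H := by
  obtain ⟨f, hf, rfl⟩ := h
  exact LinearMap.isCoatom_ker_of_surjective (LinearMap.surjective_of_ne_zero hf)

theorem Submodule.dualAnnihilator_comap_eq_map_dualMap {K V₁ V₂ : Type*} [Field K]
    [AddCommGroup V₁] [Module K V₁] [AddCommGroup V₂] [Module K V₂]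
    (f : V₁ →ₗ[K] V₂) (W : Submodule K V₂) :
    (W.comap f).dualAnnihilator = W.dualAnnihilator.map f.dualMap := by
  have hker : W.comap f = LinearMap.ker (W.mkQ ∘ₗ f) := by rw [LinearMap.ker_comp, W.ker_mkQ]
  rw [hker, ← LinearMap.range_dualMap_eq_dualAnnihilator_ker, ← LinearMap.dualMap_comp_dualMap,
    LinearMap.range_comp, W.range_dualMap_mkQ_eq]

theorem Submodule.disjoint_map_of_ker_le {R M N : Type*} [Ring R] [AddCommGroup M] [Module R M]
    [AddCommGroup N] [Module R N] (f : M →ₗ[R] N) {p q : Submodule R M}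
    (hker : LinearMap.ker f ≤ p) (h : Disjoint p q) : Disjoint (p.map f) (q.map f) := by
  rw [disjoint_iff, Submodule.map_inf_eq_map_inf_comap, Submodule.comap_map_eq,
    ← inf_sup_assoc_of_le q hker, h.eq_bot, bot_sup_eq]
  exact LinearMap.le_ker_iff_map.mp le_rfl

section Arrangement

theorem dualAnnihilator_le_arrSpan {𝓗 : Finset (Submodule ℂ V)} {H : Submodule ℂ V}
    (hH : H ∈ 𝓗) : H.dualAnnihilator ≤ arrSpan 𝓗 :=
  le_iSup₂_of_le H hH le_rfl

theorem arrSpan_mono {𝓐 𝓑 : Finset (Submodule ℂ V)} (h : 𝓐 ⊆ 𝓑) : arrSpan 𝓐 ≤ arrSpan 𝓑 :=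
  iSup₂_le fun _ hH => dualAnnihilator_le_arrSpan (h hH)

theorem arrSpan_arrLoc_le (𝓗 : Finset (Submodule ℂ V)) (L : Submodule ℂ V) :
    arrSpan (arrLoc 𝓗 L) ≤ L.dualAnnihilator :=
  iSup₂_le fun _ hH => Submodule.dualAnnihilator_anti (Finset.mem_filter.1 hH).2

theorem arrSpan_singleton (H : Submodule ℂ V) : arrSpan {H} = H.dualAnnihilator := by
  simp [arrSpan]

theorem arrSpan_image_comap {U : Type*} [AddCommGroup U] [Module ℂ U] (f : U →ₗ[ℂ] V)
    (𝓗 : Finset (Submodule ℂ V)) :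
    arrSpan (𝓗.image (Submodule.comap f)) = (arrSpan 𝓗).map f.dualMap := by
  simp only [arrSpan, Finset.iSup_finset_image, Submodule.map_iSup,
    Submodule.dualAnnihilator_comap_eq_map_dualMap]

theorem disjoint_of_disjoint_arrSpan {𝓐 𝓑 : Finset (Submodule ℂ V)} (h𝓐 : ∀ H ∈ 𝓐, H ≠ ⊤)
    (h : Disjoint (arrSpan 𝓐) (arrSpan 𝓑)) : Disjoint 𝓐 𝓑 :=
  Finset.disjoint_left.2 fun H hA hB => h𝓐 H hA <| Submodule.dualAnnihilator_eq_bot_iff.1 <|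
    le_bot_iff.1 <| h (dualAnnihilator_le_arrSpan hA) (dualAnnihilator_le_arrSpan hB)

theorem arrIrreducible_of_forall_mem_left {𝓗 : Finset (Submodule ℂ V)} {H₀ : Submodule ℂ V}
    (h₀ : H₀ ∈ 𝓗)
    (h : ∀ 𝓐 𝓑 : Finset (Submodule ℂ V), 𝓑.Nonempty → Disjoint 𝓐 𝓑 → 𝓐 ∪ 𝓑 = 𝓗 →
      Disjoint (arrSpan 𝓐) (arrSpan 𝓑) → H₀ ∈ 𝓐 → False) :
    ArrIrreducible 𝓗 := by
  rintro ⟨𝓐, 𝓑, h𝓐, h𝓑, hd, hu, hs⟩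
  rcases Finset.mem_union.1 (hu ▸ h₀) with hA | hB
  · exact h 𝓐 𝓑 h𝓑 hd hu hs hA
  · exact h 𝓑 𝓐 h𝓐 hd.symm (by rwa [Finset.union_comm]) hs.symm hB

def arrClosure (𝓗 : Finset (Submodule ℂ V)) (X : Submodule ℂ V) : Submodule ℂ V :=
  ⨅ H ∈ arrLoc 𝓗 X, H

variable {𝓗 : Finset (Submodule ℂ V)} {X : Submodule ℂ V}

theorem le_arrClosure : X ≤ arrClosure 𝓗 X :=
  le_iInf₂ fun _ hH => (Finset.mem_filter.1 hH).2

theorem arrClosure_le {H : Submodule ℂ V} (hH : H ∈ arrLoc 𝓗 X) : arrClosure 𝓗 X ≤ H :=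
  iInf₂_le H hH

theorem arrClosure_mem_arrInters : arrClosure 𝓗 X ∈ arrInters 𝓗 :=
  ⟨arrLoc 𝓗 X, Finset.filter_subset _ _, rfl⟩

theorem arrInters_mono {𝓖 : Finset (Submodule ℂ V)} (h : 𝓖 ⊆ 𝓗) : arrInters 𝓖 ⊆ arrInters 𝓗 :=
  fun _ ⟨S, hS, hL⟩ => ⟨S, hS.trans h, hL⟩

theorem arrLoc_mono {𝓖 : Finset (Submodule ℂ V)} (h : 𝓖 ⊆ 𝓗) : arrLoc 𝓖 X ⊆ arrLoc 𝓗 X :=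
  Finset.filter_subset_filter _ h

theorem arrLoc_arrClosure : arrLoc 𝓗 (arrClosure 𝓗 X) = arrLoc 𝓗 X := by
  ext H
  simp only [arrLoc, Finset.mem_filter, and_congr_right_iff]
  exact fun hH => ⟨le_arrClosure.trans, fun hXH => arrClosure_le (Finset.mem_filter.2 ⟨hH, hXH⟩)⟩

theorem arrClosure_eq_of_mem_arrInters {L : Submodule ℂ V} (hL : L ∈ arrInters 𝓗) :
    arrClosure 𝓗 L = L := by
  obtain ⟨S, hS, rfl⟩ := hL
  refine le_antisymm (le_iInf₂ fun H hH => arrClosure_le ?_) le_arrClosure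
  exact Finset.mem_filter.2 ⟨hS hH, iInf₂_le H hH⟩

theorem dualAnnihilator_arrClosure [FiniteDimensional ℂ V] :
    (arrClosure 𝓗 X).dualAnnihilator = arrSpan (arrLoc 𝓗 X) := by
  rw [arrClosure, arrSpan, iInf_subtype', iSup_subtype']
  exact Subspace.dualAnnihilator_iInf_eq _

theorem arrLoc_eq_insert_erase {H₀ : Submodule ℂ V} (h₀ : H₀ ∈ 𝓗) (hX : X ≤ H₀) :
    arrLoc 𝓗 X = insert H₀ (arrLoc (𝓗.erase H₀) X) := by
  rw [arrLoc, arrLoc, Finset.filter_erase, Finset.insert_erase (Finset.mem_filter.2 ⟨h₀, hX⟩)]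

theorem arrLoc_arrClosure_erase_of_not_le {H₀ : Submodule ℂ V}
    (hX : ¬ arrClosure (𝓗.erase H₀) X ≤ H₀) :
    arrLoc 𝓗 (arrClosure (𝓗.erase H₀) X) = arrLoc (𝓗.erase H₀) X := by
  rw [← arrLoc_arrClosure (𝓗 := 𝓗.erase H₀), arrLoc, arrLoc, Finset.filter_erase,
    Finset.erase_eq_of_notMem fun h => hX (Finset.mem_filter.1 h).2]

theorem disjoint_dualAnnihilator_of_not_le {H L : Submodule ℂ V} (hH : IsHyperplane H)
    (hL : ¬ L ≤ H) : Disjoint L.dualAnnihilator H.dualAnnihilator := by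
  rw [disjoint_iff, ← Submodule.dualAnnihilator_sup_eq,
    codisjoint_iff.1 (hH.isCoatom.not_le_iff_codisjoint.1 hL).symm, Submodule.dualAnnihilator_top]

end Arrangement

section Induced

variable {𝓗 : Finset (Submodule ℂ V)} {H₀ : Submodule ℂ V} {L'' : Submodule ℂ H₀}

theorem image_comap_arrLoc_erase :
    (arrLoc (𝓗.erase H₀) (L''.map H₀.subtype)).image (Submodule.comap H₀.subtype) =
      arrLoc (inducedArr 𝓗 H₀) L'' := by
  ext K
  simp only [arrLoc, inducedArr, Finset.mem_image, Finset.mem_filter, Submodule.map_le_iff_le_comap]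
  constructor
  · rintro ⟨H, ⟨hH, hle⟩, rfl⟩
    exact ⟨⟨H, hH, rfl⟩, hle⟩
  · rintro ⟨⟨H, hH, rfl⟩, hle⟩
    exact ⟨H, ⟨hH, hle⟩, rfl⟩

theorem comap_arrClosure_erase :
    (arrClosure (𝓗.erase H₀) (L''.map H₀.subtype)).comap H₀.subtype =
      arrClosure (inducedArr 𝓗 H₀) L'' := by
  simp only [arrClosure, ← image_comap_arrLoc_erase, Finset.iInf_finset_image,
    Submodule.comap_iInf]

theorem comap_subtype_ne_top (harr : IsArrangement 𝓗) (h₀ : H₀ ∈ 𝓗) {H : Submodule ℂ V}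
    (hH : H ∈ 𝓗.erase H₀) : H.comap H₀.subtype ≠ ⊤ := by
  rw [Ne, Submodule.comap_subtype_eq_top]
  intro hle
  exact Finset.ne_of_mem_erase hH <|
    ((harr H₀ h₀).isCoatom.le_iff_eq (harr H (Finset.mem_of_mem_erase hH)).isCoatom.ne_top).1 hle

theorem arrReducible_arrLoc_inducedArr (harr : IsArrangement 𝓗) (h₀ : H₀ ∈ 𝓗)
    {𝓐 𝓑 : Finset (Submodule ℂ V)} (h𝓐 : 𝓐.Nonempty) (h𝓑 : 𝓑.Nonempty)
    (hu : 𝓐 ∪ 𝓑 = arrLoc (𝓗.erase H₀) (L''.map H₀.subtype))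
    (hs : Disjoint (arrSpan 𝓐 ⊔ H₀.dualAnnihilator) (arrSpan 𝓑)) :
    ArrReducible (arrLoc (inducedArr 𝓗 H₀) L'') := by
  have hker : LinearMap.ker H₀.subtype.dualMap ≤ arrSpan 𝓐 ⊔ H₀.dualAnnihilator := by
    rw [LinearMap.ker_dualMap_eq_dualAnnihilator_range, Submodule.range_subtype]
    exact le_sup_right
  have hs'' : Disjoint (arrSpan (𝓐.image (Submodule.comap H₀.subtype)))
      (arrSpan (𝓑.image (Submodule.comap H₀.subtype))) := by
    rw [arrSpan_image_comap, arrSpan_image_comap]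
    exact (Submodule.disjoint_map_of_ker_le _ hker hs).mono_left
      (Submodule.map_mono le_sup_left)
  refine ⟨_, _, h𝓐.image _, h𝓑.image _, disjoint_of_disjoint_arrSpan ?_ hs'', ?_, hs''⟩
  · simp only [Finset.mem_image, forall_exists_index, and_imp]
    rintro _ H hH rfl
    have hH' := hu ▸ Finset.mem_union_left 𝓑 hH
    exact comap_subtype_ne_top harr h₀ (Finset.mem_filter.1 hH').1
  · rw [← Finset.image_union, hu, image_comap_arrLoc_erase]

variable {L : Submodule ℂ V}

theorem arrClosure_erase_eq_map_of_le (hL'' : L'' ∈ arrInters (inducedArr 𝓗 H₀))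
    (hLdef : L = arrClosure (𝓗.erase H₀) (L''.map H₀.subtype)) (hL : L ≤ H₀) :
    L = L''.map H₀.subtype := by
  have hcomap : L.comap H₀.subtype = L'' := by
    rw [hLdef, comap_arrClosure_erase, arrClosure_eq_of_mem_arrInters hL'']
  rw [← hcomap, Submodule.map_comap_subtype, inf_eq_right.2 hL]

theorem nonempty_arrLoc_arrClosure_erase (hL'' : (arrLoc (inducedArr 𝓗 H₀) L'').Nonempty) :
    (arrLoc 𝓗 (arrClosure (𝓗.erase H₀) (L''.map H₀.subtype))).Nonempty := by
  rw [← image_comap_arrLoc_erase, Finset.image_nonempty, ← arrLoc_arrClosure] at hL''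
  exact hL''.mono (arrLoc_mono (Finset.erase_subset _ _))

theorem arrIrreducible_arrLoc_of_not_le (harr : IsArrangement 𝓗) (h₀ : H₀ ∈ 𝓗)
    (hL'' : ArrIrreducible (arrLoc (inducedArr 𝓗 H₀) L''))
    (hLdef : L = arrClosure (𝓗.erase H₀) (L''.map H₀.subtype)) (hL : ¬ L ≤ H₀) :
    ArrIrreducible (arrLoc 𝓗 L) := by
  rintro ⟨𝓐, 𝓑, h𝓐, h𝓑, -, hu, hs⟩
  have hspan : arrSpan 𝓑 ⊔ arrSpan 𝓐 ≤ L.dualAnnihilator :=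
    (sup_le (arrSpan_mono (hu ▸ Finset.subset_union_right))
      (arrSpan_mono (hu ▸ Finset.subset_union_left))).trans (arrSpan_arrLoc_le _ _)
  -- `W(𝓐) ⊕ W(𝓑) ⊆ ann L`, and `ann L ∩ ann H₀ = 0` because `L + H₀ = V`.
  have hs' : Disjoint (arrSpan 𝓐 ⊔ H₀.dualAnnihilator) (arrSpan 𝓑) :=
    (hs.symm.disjoint_sup_right_of_disjoint_sup_left
      ((disjoint_dualAnnihilator_of_not_le (harr H₀ h₀) hL).mono_left hspan)).symm
  subst hLdef
  exact hL'' (arrReducible_arrLoc_inducedArr harr h₀ h𝓐 h𝓑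
    (hu.trans (arrLoc_arrClosure_erase_of_not_le hL)) hs')

theorem arrIrreducible_arrLoc_of_le [FiniteDimensional ℂ V] (harr : IsArrangement 𝓗)
    (h₀ : H₀ ∈ 𝓗) (hL'' : ArrIrreducible (arrLoc (inducedArr 𝓗 H₀) L''))
    (hLdef : L = arrClosure (𝓗.erase H₀) (L''.map H₀.subtype)) (hL : L ≤ H₀) :
    ArrIrreducible (arrLoc 𝓗 L) := by
  set S := arrLoc (𝓗.erase H₀) (L''.map H₀.subtype)
  have hloc : arrLoc 𝓗 L = insert H₀ S := by
    rw [arrLoc_eq_insert_erase h₀ hL, hLdef, arrLoc_arrClosure]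
  have hH₀S : H₀ ∉ S := fun h => Finset.notMem_erase H₀ 𝓗 (Finset.mem_filter.1 h).1
  refine arrIrreducible_of_forall_mem_left (hloc ▸ Finset.mem_insert_self _ _)
    fun 𝓐 𝓑 h𝓑 hd hu hs h𝓐₀ => ?_
  have hu' : 𝓐.erase H₀ ∪ 𝓑 = S := by
    rw [← Finset.erase_eq_of_notMem (Finset.disjoint_left.1 hd h𝓐₀), ← Finset.erase_union_distrib,
      hu, hloc, Finset.erase_insert hH₀S]
  obtain h𝓐' | h𝓐' := (𝓐.erase H₀).eq_empty_or_nonempty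
  · have h𝓑S : 𝓑 = S := by rwa [h𝓐', Finset.empty_union] at hu'
    have h𝓑₀ : H₀.dualAnnihilator ≤ arrSpan 𝓑 := by
      rw [h𝓑S, ← dualAnnihilator_arrClosure, ← hLdef]
      exact Submodule.dualAnnihilator_anti hL
    exact (harr H₀ h₀).isCoatom.ne_top <| Submodule.dualAnnihilator_eq_bot_iff.1 <|
      le_bot_iff.1 <| hs (dualAnnihilator_le_arrSpan h𝓐₀) h𝓑₀
  · exact hL'' (arrReducible_arrLoc_inducedArr harr h₀ h𝓐' h𝓑 hu' <| hs.mono_left <|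
      sup_le (arrSpan_mono (Finset.erase_subset _ _)) (dualAnnihilator_le_arrSpan h𝓐₀))

end Induced

theorem induced_irreducible_intersection_dichotomy_general
    [FiniteDimensional ℂ V]
    (𝓗 : Finset (Submodule ℂ V)) (harr : IsArrangement 𝓗)
    (H₀ : Submodule ℂ V) (h₀ : H₀ ∈ 𝓗)
    (L'' : Submodule ℂ ↥H₀)
    (hL'' : IsIrredInter (inducedArr 𝓗 H₀) L'')
    (L : Submodule ℂ V)
    (hLdef : L = ⨅ H ∈ (𝓗.erase H₀).filter
        (fun H => Submodule.map H₀.subtype L'' ≤ H), H) :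
    IsIrredInter 𝓗 L ∧
      ((Submodule.map H₀.subtype L'' < L ∧
          arrLoc 𝓗 (Submodule.map H₀.subtype L'') = insert H₀ (arrLoc 𝓗 L) ∧
          H₀ ∉ arrLoc 𝓗 L ∧
          Disjoint (arrSpan (arrLoc 𝓗 L)) (arrSpan {H₀})) ∨
        L = Submodule.map H₀.subtype L'') := by
  replace hLdef : L = arrClosure (𝓗.erase H₀) (L''.map H₀.subtype) := hLdef
  have hinter : L ∈ arrInters 𝓗 :=
    hLdef ▸ arrInters_mono (Finset.erase_subset _ _) arrClosure_mem_arrInters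
  have hne : (arrLoc 𝓗 L).Nonempty := hLdef ▸ nonempty_arrLoc_arrClosure_erase hL''.2.1
  by_cases hL : L ≤ H₀
  · exact ⟨⟨hinter, hne, arrIrreducible_arrLoc_of_le harr h₀ hL''.2.2 hLdef hL⟩,
      Or.inr (arrClosure_erase_eq_map_of_le hL''.1 hLdef hL)⟩
  refine ⟨⟨hinter, hne, arrIrreducible_arrLoc_of_not_le harr h₀ hL''.2.2 hLdef hL⟩,
    Or.inl ⟨?_, ?_, fun h => hL (Finset.mem_filter.1 h).2, ?_⟩⟩
  · exact (hLdef ▸ le_arrClosure).lt_of_ne fun h => hL (h ▸ Submodule.map_subtype_le _ _)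
  · rw [arrLoc_eq_insert_erase h₀ (Submodule.map_subtype_le _ _), hLdef,
      arrLoc_arrClosure_erase_of_not_le (hLdef ▸ hL)]
  · rw [arrSpan_singleton]
    exact (disjoint_dualAnnihilator_of_not_le (harr H₀ h₀) hL).mono_left (arrSpan_arrLoc_le _ _)

/-- Let `L''` be an irreducible intersection of the induced
arrangement `𝓗''` on `H₀` with `L'' ⊊ H₀`, and let `L` be the common intersection of
all hyperplanes of `𝓗' = 𝓗 \ {H₀}` containing `L''`. Then `L` is an irreducible
intersection of `𝓗`, and either (i) `L'' ⊊ L` and `𝓗_{L''} = 𝓗_L ⊎ {H₀}` is a u-plus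
decomposition, or (ii) `L = L''`. -/
theorem induced_irreducible_intersection_dichotomy
    [FiniteDimensional ℂ V]
    (𝓗 : Finset (Submodule ℂ V)) (harr : IsArrangement 𝓗)
    (H₀ : Submodule ℂ V) (h₀ : H₀ ∈ 𝓗)
    (L'' : Submodule ℂ ↥H₀)
    (hL'' : IsIrredInter (inducedArr 𝓗 H₀) L'') (hproper : L'' ≠ ⊤)
    (L : Submodule ℂ V)
    (hLdef : L = ⨅ H ∈ (𝓗.erase H₀).filter
        (fun H => Submodule.map H₀.subtype L'' ≤ H), H) :
    IsIrredInter 𝓗 L ∧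
      ((Submodule.map H₀.subtype L'' < L ∧
          arrLoc 𝓗 (Submodule.map H₀.subtype L'') = insert H₀ (arrLoc 𝓗 L) ∧
          H₀ ∉ arrLoc 𝓗 L ∧
          Disjoint (arrSpan (arrLoc 𝓗 L)) (arrSpan {H₀})) ∨
        L = Submodule.map H₀.subtype L'') :=
  induced_irreducible_intersection_dichotomy_general 𝓗 harr H₀ h₀ L'' hL'' L hLdef
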